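/- Let N ≥ 1 and let u ∈ L²(ℝ^N) be a function that is not (almost everywhere) zero. Then the infimum over all k ∈ ℤ^N with k ≠ 0 of ‖u − u(· − k)‖_{L²(ℝ^N)} is strictly positive. -/

import Mathlib

open MeasureTheory Real

noncomputable section

abbrev Euc (N : ℕ) := EuclideanSpace ℝ (Fin N)

def intVec {N : ℕ} (k : Fin N → ℤ) : Euc N := WithLp.toLp 2 (fun i => (k i : ℝ))

/-!
Approximate `u` in `Lᵖ` by a compactly supported `g`. For `v` outside the compact set
`tsupport g - tsupport g`, the functions `g` and `g (· - v)` have disjoint supports, so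
`‖g - g (· - v)‖ ≥ ‖g‖`, and hence `‖u - u (· - v)‖ ≥ ‖u‖ / 4` for all `v` off a compact set.
That set contains only finitely many lattice points, and at each of them `‖u - u (· - v)‖ > 0`:
otherwise `u` would be invariant under every `n • v`, which eventually leaves the compact set.
-/

open Filter Topology
open scoped ENNReal

theorem lt_iInf_of_eventually_cofinite {α ι : Type*} [CompleteLinearOrder α] {f : ι → α}
    {p : ι → Prop} {a c : α} (hac : a < c) (hfar : ∀ᶠ i in cofinite, c ≤ f i)
    (hp : ∀ i, p i → a < f i) : a < ⨅ (i) (_ : p i), f i := by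
  have hF : {i | p i ∧ ¬ c ≤ f i}.Finite := hfar.subset fun i hi => hi.2
  have ha : a < c ⊓ hF.toFinset.inf f :=
    lt_inf_iff.2 ⟨hac, (Finset.lt_inf_iff (hac.trans_le le_top)).2 fun i hi =>
      hp i (hF.mem_toFinset.1 hi).1⟩
  refine ha.trans_le (le_iInf₂ fun i hi => ?_)
  by_cases hci : c ≤ f i
  · exact inf_le_left.trans hci
  · exact inf_le_right.trans (Finset.inf_le (hF.mem_toFinset.2 ⟨hi, hci⟩))

section Translate

variable {G E : Type*} [AddCommGroup G] [NormedAddCommGroup E]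

theorem HasCompactSupport.eventually_norm_le_norm_sub_translate [TopologicalSpace G]
    [IsTopologicalAddGroup G] {g : G → E} (hg : HasCompactSupport g) :
    ∀ᶠ v in cocompact G, ∀ x, ‖g x‖ ≤ ‖g x - g (x - v)‖ := by
  have hD : IsCompact ((fun y : G × G => y.1 - y.2) '' (tsupport g ×ˢ tsupport g)) :=
    (hg.prod hg).image continuous_sub
  filter_upwards [hD.compl_mem_cocompact] with v hv x
  by_cases hx : x ∈ tsupport g
  · have hxv : x - v ∉ tsupport g := fun hxv => hv ⟨(x, x - v), ⟨hx, hxv⟩, sub_sub_cancel x v⟩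
    rw [image_eq_zero_of_notMem_tsupport hxv, sub_zero]
  · rw [image_eq_zero_of_notMem_tsupport hx, norm_zero]
    exact norm_nonneg _

variable [MeasurableSpace G] {μ : Measure G}

theorem ae_eq_comp_sub_nsmul {β : Type*} [MeasurableAdd G] [μ.IsAddRightInvariant]
    {u : G → β} {v : G} (h : u =ᵐ[μ] fun x => u (x - v)) (n : ℕ) :
    u =ᵐ[μ] fun x => u (x - n • v) := by
  induction n with
  | zero => simp
  | succ n ih =>
    calc u =ᵐ[μ] fun x => u (x - v) := h
      _ =ᵐ[μ] fun x => u (x - v - n • v) :=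
        (measurePreserving_sub_right μ v).quasiMeasurePreserving.ae_eq ih
      _ = fun x => u (x - (n + 1) • v) := by simp only [sub_sub, succ_nsmul']

variable {p : ℝ≥0∞}

theorem eLpNorm_le_three_mul_add_eLpNorm_sub_translate [MeasurableAdd G]
    [μ.IsAddRightInvariant] (hp : 1 ≤ p) {u g : G → E} (hu : AEStronglyMeasurable u μ)
    (hg : AEStronglyMeasurable g μ) {δ : ℝ≥0∞} (hδ : eLpNorm (u - g) p μ ≤ δ) {v : G}
    (hv : ∀ x, ‖g x‖ ≤ ‖g x - g (x - v)‖) :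
    eLpNorm u p μ ≤ 3 * δ + eLpNorm (fun x => u x - u (x - v)) p μ := by
  have hτ := measurePreserving_sub_right μ v
  have hτu : AEStronglyMeasurable (fun x => u (x - v)) μ := hu.comp_measurePreserving hτ
  have hτg : AEStronglyMeasurable (fun x => g (x - v)) μ := hg.comp_measurePreserving hτ
  have hτδ : eLpNorm (fun x => u (x - v) - g (x - v)) p μ ≤ δ :=
    (eLpNorm_comp_measurePreserving (g := u - g) (hu.sub hg) hτ).trans_le hδ
  calc eLpNorm u p μ = eLpNorm ((u - g) + g) p μ := by rw [sub_add_cancel]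
    _ ≤ δ + eLpNorm g p μ := (eLpNorm_add_le (hu.sub hg) hg hp).trans (by gcongr)
    _ ≤ δ + eLpNorm (fun x => g x - g (x - v)) p μ := by gcongr; exact eLpNorm_mono hv
    _ = δ + eLpNorm ((g - u) + ((fun x => u x - u (x - v)) + fun x => u (x - v) - g (x - v)))
          p μ := by congr 2; ext x; simp only [Pi.add_apply, Pi.sub_apply]; abel
    _ ≤ δ + (eLpNorm (g - u) p μ + (eLpNorm (fun x => u x - u (x - v)) p μ +
          eLpNorm (fun x => u (x - v) - g (x - v)) p μ)) := by
      gcongr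
      exact (eLpNorm_add_le (hg.sub hu) ((hu.sub hτu).add (hτu.sub hτg)) hp).trans
        (by gcongr; exact eLpNorm_add_le (hu.sub hτu) (hτu.sub hτg) hp)
    _ ≤ δ + (δ + (eLpNorm (fun x => u x - u (x - v)) p μ + δ)) := by
      rw [eLpNorm_sub_comm]; gcongr
    _ = 3 * δ + eLpNorm (fun x => u x - u (x - v)) p μ := by ring

theorem MeasureTheory.MemLp.exists_pos_eventually_le_eLpNorm_sub_translate [TopologicalSpace G]
    [IsTopologicalAddGroup G] [NormalSpace G] [WeaklyLocallyCompactSpace G] [BorelSpace G]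
    [μ.IsAddRightInvariant] [μ.Regular] [NormedSpace ℝ E] (hp1 : 1 ≤ p) (hp : p ≠ ∞) {u : G → E}
    (hu : MemLp u p μ) (hne : ¬ u =ᵐ[μ] 0) :
    ∃ c, 0 < c ∧ ∀ᶠ v in cocompact G, c ≤ eLpNorm (fun x => u x - u (x - v)) p μ := by
  set δ := eLpNorm u p μ / 4
  have hδ : δ ≠ 0 := ENNReal.div_ne_zero.2
    ⟨(eLpNorm_eq_zero_iff hu.aestronglyMeasurable (zero_lt_one.trans_le hp1).ne').not.2 hne, by simp⟩
  have hδ_top : δ ≠ ∞ := ENNReal.div_ne_top hu.eLpNorm_ne_top (by simp)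
  obtain ⟨g, hg_supp, hug, -, hg⟩ := hu.exists_hasCompactSupport_eLpNorm_sub_le hp hδ
  refine ⟨δ, pos_iff_ne_zero.2 hδ, ?_⟩
  filter_upwards [hg_supp.eventually_norm_le_norm_sub_translate] with v hv
  have h4 : eLpNorm u p μ = 3 * δ + δ := by
    rw [← ENNReal.div_mul_cancel four_ne_zero ENNReal.ofNat_ne_top (b := eLpNorm u p μ)]; ring
  have := eLpNorm_le_three_mul_add_eLpNorm_sub_translate hp1 hu.aestronglyMeasurable
    hg.aestronglyMeasurable hug hv
  rwa [h4, ENNReal.add_le_add_iff_left (ENNReal.mul_ne_top (by simp) hδ_top)] at this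

end Translate

theorem MeasureTheory.MemLp.eLpNorm_sub_translate_ne_zero {G E : Type*} [NormedAddCommGroup G]
    [NormedSpace ℝ G] [WeaklyLocallyCompactSpace G] [MeasurableSpace G] [BorelSpace G]
    [NormedAddCommGroup E] [NormedSpace ℝ E] {μ : Measure G} [μ.IsAddRightInvariant] [μ.Regular]
    {p : ℝ≥0∞} (hp1 : 1 ≤ p) (hp : p ≠ ∞) {u : G → E}
    (hu : MemLp u p μ) (hne : ¬ u =ᵐ[μ] 0) {v : G} (hv : v ≠ 0) :
    eLpNorm (fun x => u x - u (x - v)) p μ ≠ 0 := by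
  obtain ⟨c, hc, hfar⟩ := hu.exists_pos_eventually_le_eLpNorm_sub_translate hp1 hp hne
  intro h0
  have hinv : u =ᵐ[μ] fun x => u (x - v) := by
    have hτu := hu.aestronglyMeasurable.comp_measurePreserving (measurePreserving_sub_right μ v)
    filter_upwards [(eLpNorm_eq_zero_iff (hu.aestronglyMeasurable.sub hτu)
      (zero_lt_one.trans_le hp1).ne').1 h0] with x hx
    exact sub_eq_zero.1 hx
  have hmul : Tendsto (fun n : ℕ => n • v) atTop (cocompact G) := by
    refine tendsto_cocompact_of_tendsto_dist_comp_atTop 0 ?_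
    simp only [dist_zero_right, RCLike.norm_nsmul ℝ, nsmul_eq_mul]
    exact tendsto_natCast_atTop_atTop.atTop_mul_const (norm_pos_iff.2 hv)
  obtain ⟨n, hn⟩ := (hmul.eventually hfar).exists
  have : eLpNorm (fun x => u x - u (x - n • v)) p μ = 0 := by
    rw [eLpNorm_congr_ae ((ae_eq_comp_sub_nsmul hinv n).mono fun x hx => sub_eq_zero.2 hx),
      eLpNorm_zero']
  exact hc.not_ge (this ▸ hn)

theorem intVec_ne_zero {N : ℕ} {k : Fin N → ℤ} (hk : k ≠ 0) : intVec k ≠ 0 := by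
  contrapose! hk
  ext i
  simpa [intVec] using congrArg (· i) hk

theorem tendsto_intVec_cofinite_cocompact (N : ℕ) :
    Tendsto (intVec (N := N)) cofinite (cocompact (Euc N)) := by
  have hcast : Tendsto (fun (k : Fin N → ℤ) i => (k i : ℝ)) cofinite (cocompact (Fin N → ℝ)) := by
    simpa only [coprodᵢ_cofinite, coprodᵢ_cocompact] using
      Tendsto.pi_map_coprodᵢ fun _ : Fin N => Int.tendsto_coe_cofinite
  exact (PiLp.homeomorph 2 _).symm.isClosedEmbedding.tendsto_cocompact.comp hcast

theorem translates_bounded_away_general (N : ℕ) (u : Euc N → ℝ)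
    (hu : MemLp u 2 (volume : Measure (Euc N)))
    (hne : ¬ u =ᵐ[(volume : Measure (Euc N))] (fun _ => (0 : ℝ))) :
    0 < ⨅ (k : Fin N → ℤ) (_ : k ≠ 0),
        eLpNorm (fun x => u x - u (x - intVec k)) 2 (volume : Measure (Euc N)) := by
  obtain ⟨c, hc, hfar⟩ :=
    hu.exists_pos_eventually_le_eLpNorm_sub_translate one_le_two ENNReal.ofNat_ne_top hne
  exact lt_iInf_of_eventually_cofinite hc ((tendsto_intVec_cofinite_cocompact N).eventually hfar)
    fun k hk => pos_iff_ne_zero.2 <|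
      hu.eLpNorm_sub_translate_ne_zero one_le_two ENNReal.ofNat_ne_top hne (intVec_ne_zero hk)

/-- For a nonzero `u ∈ L²(ℝ^N)`, the infimum over nonzero integer vectors `k` of the
`L²`-distance between `u` and its translate `u(· − k)` is strictly positive. -/
theorem translates_bounded_away (N : ℕ) (hN : 1 ≤ N) (u : Euc N → ℝ)
    (hu : MemLp u 2 (volume : Measure (Euc N)))
    (hne : ¬ u =ᵐ[(volume : Measure (Euc N))] (fun _ => (0 : ℝ))) :
    0 < ⨅ (k : Fin N → ℤ) (_ : k ≠ 0),
        eLpNorm (fun x => u x - u (x - intVec k)) 2 (volume : Measure (Euc N)) :=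
  translates_bounded_away_general N u hu hne
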